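/- Let m ∈ ℕ, let F, G : ℝ × ℝ^m → ℝ^m be continuously differentiable, let X₀ ∈ ℝ^m, T > 0 and κ₀ > 0. Assume Y : [0,T] → ℝ^m satisfies Y'(t) = F(t, Y(t)) with Y(0) = X₀, and that for every κ ∈ (0,κ₀] the map X_κ : [0,T] → ℝ^m satisfies X_κ'(t) = F(t, X_κ(t)) + κ·G(t, X_κ(t)) with X_κ(0) = X₀, all X_κ taking values in a fixed compact set. If moreover G(0, X₀) ≠ 0, then there exist c₂ > 0, t₀ ∈ (0,T] and κ₁ ∈ (0,κ₀] such that ‖X_κ(t) − Y(t)‖ ≥ c₂·κ·t for all t ∈ (0,t₀] and all κ ∈ (0,κ₁]. -/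

import Mathlib

open Real Set Filter Topology
open scoped NNReal

/-!
Grönwall's inequality, with `F` Lipschitz on a compact set containing both trajectories, gives
`‖X κ t - Y t‖ ≤ κ C t`. Hence the derivative `F (t, X κ t) - F (t, Y t) + κ G (t, X κ t)` of
`X κ - Y` stays within `L κ C t + κ ‖G (t, X κ t) - G (0, X₀)‖ ≤ κ ‖G (0, X₀)‖ / 2` of
`κ G (0, X₀)` for small `t`, uniformly in `κ` by continuity of `G`; a curve whose velocity stays
within `‖w‖ / 2` of `w` moves by at least `‖w‖ t / 2` in time `t`.
-/

theorem gronwallBound_zero_le {K ε : ℝ} (hK : 0 ≤ K) (hε : 0 ≤ ε) (x : ℝ) :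
    gronwallBound 0 K ε x ≤ ε * x * exp (K * x) := by
  rcases hK.eq_or_lt with rfl | hK
  · simp [gronwallBound_K0]
  rw [gronwallBound_of_K_ne_0 hK.ne']
  dsimp only
  rw [zero_mul, zero_add, div_mul_eq_mul_div, div_le_iff₀ hK]
  -- `exp y - 1 ≤ y * exp y` is `1 - y ≤ exp (-y)` multiplied by `exp y`
  have key : exp (K * x) - 1 ≤ K * x * exp (K * x) := by
    have := mul_le_mul_of_nonneg_left (one_sub_le_exp_neg (K * x)) (exp_pos (K * x)).le
    rw [← exp_add, add_neg_cancel, exp_zero] at this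
    linarith
  nlinarith

theorem ContDiff.exists_lipschitzOnWith_prodMk_left {E E' F : Type*} [NormedAddCommGroup E]
    [NormedSpace ℝ E] [NormedAddCommGroup E'] [NormedSpace ℝ E'] [NormedAddCommGroup F]
    [NormedSpace ℝ F] {f : E × E' → F} (hf : ContDiff ℝ 1 f) {A : Set E} {B : Set E'}
    (hA : IsCompact A) (hB : IsCompact B) :
    ∃ L, ∀ a ∈ A, LipschitzOnWith L (fun b => f (a, b)) B := by
  obtain ⟨L, hL⟩ :=
    hf.locallyLipschitz.locallyLipschitzOn.exists_lipschitzOnWith_of_compact (hA.prod hB)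
  refine ⟨L, fun a ha => ?_⟩
  have := hL.comp (LipschitzWith.prodMk_left a).lipschitzOnWith fun b hb => ⟨ha, hb⟩
  rwa [mul_one] at this

section PerturbedTrajectory

variable {E : Type*} [NormedAddCommGroup E] [NormedSpace ℝ E]

theorem norm_sub_le_of_hasDerivAt_add {v : ℝ → E → E} {s : Set E} {L : ℝ≥0} {x y p : ℝ → E}
    {a b ε : ℝ} (hv : ∀ t ∈ Ico a b, LipschitzOnWith L (v t) s)
    (hx : ∀ t ∈ Icc a b, HasDerivAt x (v t (x t) + p t) t)
    (hy : ∀ t ∈ Icc a b, HasDerivAt y (v t (y t)) t)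
    (hxs : ∀ t ∈ Ico a b, x t ∈ s) (hys : ∀ t ∈ Ico a b, y t ∈ s)
    (hp : ∀ t ∈ Ico a b, ‖p t‖ ≤ ε) (ha : x a = y a) :
    ∀ t ∈ Icc a b, ‖x t - y t‖ ≤ ε * (t - a) * exp (L * (b - a)) := by
  intro t ht
  rcases ht.1.eq_or_lt with rfl | hat
  · simp [ha]
  have hε : 0 ≤ ε := (norm_nonneg _).trans (hp a ⟨le_rfl, hat.trans_le ht.2⟩)
  have hgronwall := dist_le_of_approx_trajectories_ODE_of_mem hv
    (fun t ht => (hx t ht).continuousAt.continuousWithinAt)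
    (fun t ht => (hx t (Ico_subset_Icc_self ht)).hasDerivWithinAt) (εf := ε)
    (fun t ht => by simpa [dist_eq_norm] using hp t ht) hxs
    (fun t ht => (hy t ht).continuousAt.continuousWithinAt)
    (fun t ht => (hy t (Ico_subset_Icc_self ht)).hasDerivWithinAt) (εg := 0) (by simp) hys
    (δ := 0) (by simp [ha]) t ht
  rw [dist_eq_norm, add_zero] at hgronwall
  refine hgronwall.trans ((gronwallBound_zero_le L.2 hε _).trans ?_)
  exact mul_le_mul_of_nonneg_left (exp_le_exp.2 (mul_le_mul_of_nonneg_left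
    (sub_le_sub_right ht.2 a) L.2)) (mul_nonneg hε (sub_nonneg.2 ht.1))

theorem le_norm_image_sub_of_norm_deriv_sub_le {f f' : ℝ → E} {w : E} {r a b : ℝ} (hab : a ≤ b)
    (hf : ∀ x ∈ Icc a b, HasDerivAt f (f' x) x) (bound : ∀ x ∈ Ico a b, ‖f' x - w‖ ≤ r) :
    (‖w‖ - r) * (b - a) ≤ ‖f b - f a‖ := by
  have hdev := norm_image_sub_le_of_norm_deriv_le_segment' (f := fun x => f x - x • w)
    (fun x hx => ((hf x hx).sub ((hasDerivAt_id x).smul_const w)).hasDerivWithinAt)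
    (by simpa using bound) b ⟨hab, le_rfl⟩
  have hsplit : (b - a) • w = (f b - f a) - ((f b - b • w) - (f a - a • w)) := by
    rw [sub_smul]; abel
  have := norm_sub_le (f b - f a) ((f b - b • w) - (f a - a • w))
  rw [← hsplit, norm_smul, Real.norm_of_nonneg (sub_nonneg.2 hab)] at this
  linarith

theorem le_norm_sub_of_hasDerivAt_add_smul {v w : ℝ → E → E} {x y : ℝ → E} {w₀ : E}
    {κ r₁ r₂ a b : ℝ} (hab : a ≤ b) (hκ : 0 ≤ κ)
    (hx : ∀ t ∈ Icc a b, HasDerivAt x (v t (x t) + κ • w t (x t)) t)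
    (hy : ∀ t ∈ Icc a b, HasDerivAt y (v t (y t)) t)
    (hv : ∀ t ∈ Ico a b, ‖v t (x t) - v t (y t)‖ ≤ κ * r₁)
    (hw : ∀ t ∈ Ico a b, ‖w t (x t) - w₀‖ ≤ r₂) (ha : x a = y a) :
    κ * (‖w₀‖ - r₁ - r₂) * (b - a) ≤ ‖x b - y b‖ := by
  have hsep := le_norm_image_sub_of_norm_deriv_sub_le hab (f := fun t => x t - y t)
    (w := κ • w₀) (r := κ * (r₁ + r₂)) (fun t ht => (hx t ht).sub (hy t ht)) fun t ht => ?_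
  · rw [ha, sub_self, sub_zero, norm_smul, Real.norm_of_nonneg hκ] at hsep
    linarith
  calc ‖(v t (x t) + κ • w t (x t) - v t (y t)) - κ • w₀‖
      = ‖(v t (x t) - v t (y t)) + κ • (w t (x t) - w₀)‖ := by
        rw [smul_sub]; congr 1; abel
    _ ≤ κ * r₁ + κ * r₂ := by
        refine norm_add_le_of_le (hv t ht) ?_
        rw [norm_smul, Real.norm_of_nonneg hκ]
        exact mul_le_mul_of_nonneg_left (hw t ht) hκ
    _ = κ * (r₁ + r₂) := by ring

end PerturbedTrajectory

theorem tendsto_prodMk_of_norm_sub_le {E : Type*} [SeminormedAddCommGroup E]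
    {X : ℝ → ℝ → E} {Y : ℝ → E} {I : Set ℝ} {a C : ℝ}
    (hY : ContinuousWithinAt Y (Ici a) a)
    (hXY : ∀ᶠ t in 𝓝[≥] a, ∀ κ ∈ I, ‖X κ t - Y t‖ ≤ C * (t - a)) :
    Tendsto (fun p : ℝ × ℝ => (p.1, X p.2 p.1)) (𝓝[≥] a ×ˢ 𝓟 I) (𝓝 (a, Y a)) := by
  have hfst : Tendsto (fun p : ℝ × ℝ => p.1) (𝓝[≥] a ×ˢ 𝓟 I) (𝓝[≥] a) := tendsto_fst
  refine (tendsto_nhdsWithin_iff.1 hfst).1.prodMk_nhds ?_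
  have hsmall : Tendsto (fun p : ℝ × ℝ => X p.2 p.1 - Y p.1) (𝓝[≥] a ×ˢ 𝓟 I) (𝓝 0) := by
    refine squeeze_zero_norm' (a := fun p => C * (p.1 - a)) ?_ ?_
    · exact eventually_prod_principal_iff.2 hXY
    · have : Tendsto (fun t : ℝ => C * (t - a)) (𝓝 a) (𝓝 0) := by
        simpa using ((continuous_sub_right a).const_mul C).tendsto a
      exact this.comp (tendsto_nhdsWithin_iff.1 hfst).1
  simpa using (hY.tendsto.comp hfst).add hsmall

theorem eventually_forall_norm_sub_lt {E F : Type*} [SeminormedAddCommGroup E]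
    [SeminormedAddCommGroup F] {G : ℝ × E → F} {X : ℝ → ℝ → E} {Y : ℝ → E} {I : Set ℝ}
    {a C ε : ℝ} (hG : ContinuousAt G (a, Y a)) (hY : ContinuousWithinAt Y (Ici a) a)
    (hXY : ∀ᶠ t in 𝓝[≥] a, ∀ κ ∈ I, ‖X κ t - Y t‖ ≤ C * (t - a)) (hε : 0 < ε) :
    ∀ᶠ t in 𝓝[≥] a, ∀ κ ∈ I, ‖G (t, X κ t) - G (a, Y a)‖ < ε := by
  have := (hG.tendsto.comp (tendsto_prodMk_of_norm_sub_le hY hXY)).eventually_mem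
    (Metric.ball_mem_nhds _ hε)
  simpa [dist_eq_norm] using eventually_prod_principal_iff.1 this

theorem exists_lipschitzOnWith_and_norm_sub_le {E : Type*} [NormedAddCommGroup E]
    [NormedSpace ℝ E] {F G : ℝ × E → E} {T κ₀ : ℝ} {Y : ℝ → E} {X : ℝ → ℝ → E} {K : Set E}
    (hF : ContDiff ℝ 1 F) (hG : Continuous G) (hY : ∀ t ∈ Icc 0 T, HasDerivAt Y (F (t, Y t)) t)
    (hX : ∀ κ ∈ Ioc 0 κ₀, ∀ t ∈ Icc 0 T,
      HasDerivAt (X κ) (F (t, X κ t) + κ • G (t, X κ t)) t)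
    (hX0 : ∀ κ ∈ Ioc 0 κ₀, X κ 0 = Y 0) (hK : IsCompact K)
    (hXK : ∀ κ ∈ Ioc 0 κ₀, ∀ t ∈ Icc 0 T, X κ t ∈ K) :
    ∃ L : ℝ≥0, ∃ C ≥ 0,
      (∀ t ∈ Icc 0 T, LipschitzOnWith L (fun x => F (t, x)) (K ∪ Y '' Icc 0 T)) ∧
      ∀ κ ∈ Ioc 0 κ₀, ∀ t ∈ Icc 0 T, ‖X κ t - Y t‖ ≤ κ * C * t := by
  have hYc : ContinuousOn Y (Icc 0 T) := fun t ht => (hY t ht).continuousAt.continuousWithinAt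
  obtain ⟨L, hL⟩ := hF.exists_lipschitzOnWith_prodMk_left isCompact_Icc
    (hK.union (isCompact_Icc.image_of_continuousOn hYc))
  obtain ⟨M, hM⟩ := (isCompact_Icc.prod hK).exists_bound_of_continuousOn hG.continuousOn
  refine ⟨L, max M 0 * exp (L * T), by positivity, hL, fun κ hκ t ht => ?_⟩
  have hp : ∀ s ∈ Ico 0 T, ‖κ • G (s, X κ s)‖ ≤ κ * max M 0 := fun s hs => by
    rw [norm_smul, Real.norm_of_nonneg hκ.1.le]
    have hs := Ico_subset_Icc_self hs
    exact mul_le_mul_of_nonneg_left ((hM _ ⟨hs, hXK κ hκ s hs⟩).trans (le_max_left _ _)) hκ.1.le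
  refine (norm_sub_le_of_hasDerivAt_add (fun t ht => hL t (Ico_subset_Icc_self ht))
    (hX κ hκ) hY (fun t ht => .inl (hXK κ hκ t (Ico_subset_Icc_self ht)))
    (fun t ht => .inr ⟨t, Ico_subset_Icc_self ht, rfl⟩) hp (hX0 κ hκ) t ht).trans_eq ?_
  rw [sub_zero, sub_zero]
  ring

/-- If `G(0,X₀) ≠ 0`, the perturbed trajectory separates from the unperturbed one
at linear rate `c₂ κ t` for small times and small `κ`. -/
theorem stmt_1 (m : ℕ)
    (F G : ℝ × EuclideanSpace ℝ (Fin m) → EuclideanSpace ℝ (Fin m))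
    (hF : ContDiff ℝ 1 F) (hG : ContDiff ℝ 1 G)
    (X₀ : EuclideanSpace ℝ (Fin m)) (T κ₀ : ℝ) (hT : 0 < T) (hκ₀ : 0 < κ₀)
    (Y : ℝ → EuclideanSpace ℝ (Fin m))
    (hY : ∀ t ∈ Set.Icc (0:ℝ) T, HasDerivAt Y (F (t, Y t)) t)
    (hY0 : Y 0 = X₀)
    (X : ℝ → ℝ → EuclideanSpace ℝ (Fin m))
    (hX : ∀ κ ∈ Set.Ioc (0:ℝ) κ₀, ∀ t ∈ Set.Icc (0:ℝ) T,
      HasDerivAt (X κ) (F (t, X κ t) + κ • G (t, X κ t)) t)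
    (hX0 : ∀ κ ∈ Set.Ioc (0:ℝ) κ₀, X κ 0 = X₀)
    (K : Set (EuclideanSpace ℝ (Fin m))) (hK : IsCompact K)
    (hXK : ∀ κ ∈ Set.Ioc (0:ℝ) κ₀, ∀ t ∈ Set.Icc (0:ℝ) T, X κ t ∈ K)
    (hG0 : G (0, X₀) ≠ 0) :
    ∃ c₂ > (0:ℝ), ∃ t₀ ∈ Set.Ioc (0:ℝ) T, ∃ κ₁ ∈ Set.Ioc (0:ℝ) κ₀,
      ∀ t ∈ Set.Ioc (0:ℝ) t₀, ∀ κ ∈ Set.Ioc (0:ℝ) κ₁,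
        c₂ * κ * t ≤ ‖X κ t - Y t‖ := by
  set g := G (0, X₀)
  have hT0 : (0 : ℝ) ∈ Icc 0 T := left_mem_Icc.2 hT.le
  obtain ⟨L, C, hC, hL, hXY⟩ := exists_lipschitzOnWith_and_norm_sub_le hF hG.continuous hY hX
    (fun κ hκ => (hX0 κ hκ).trans hY0.symm) hK hXK
  have hXY_unif : ∀ᶠ t in 𝓝[≥] 0, ∀ κ ∈ Ioc 0 κ₀, ‖X κ t - Y t‖ ≤ κ₀ * C * (t - 0) := by
    filter_upwards [Icc_mem_nhdsGE hT] with t ht κ hκ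
    rw [sub_zero]
    exact (hXY κ hκ t ht).trans (by gcongr; exacts [ht.1, hκ.2])
  have hGnear := eventually_forall_norm_sub_lt hG.continuous.continuousAt
    (hY 0 hT0).continuousAt.continuousWithinAt hXY_unif (show 0 < ‖g‖ / 4 by positivity)
  rw [hY0] at hGnear
  have hLC : Tendsto (fun s : ℝ => L * C * s) (𝓝 0) (𝓝 0) := by
    simpa using (continuous_const_mul (L * C : ℝ)).tendsto 0
  have hsmall : ∀ᶠ s in 𝓝[≥] 0, s ≤ T ∧ L * C * s ≤ ‖g‖ / 4 ∧
      ∀ κ ∈ Ioc 0 κ₀, ‖G (s, X κ s) - g‖ < ‖g‖ / 4 :=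
    ((eventually_le_nhds hT).filter_mono nhdsWithin_le_nhds).and <|
      ((hLC.eventually (eventually_le_nhds (by positivity))).filter_mono nhdsWithin_le_nhds).and
        hGnear
  obtain ⟨t₀, ht₀, hsub⟩ := mem_nhdsGE_iff_exists_Icc_subset.1 hsmall
  refine ⟨‖g‖ / 2, by positivity, t₀, ⟨ht₀, (hsub ⟨ht₀.le, le_rfl⟩).1⟩, κ₀, ⟨hκ₀, le_rfl⟩,
    fun t ht κ hκ => ?_⟩
  have hIcc : Icc 0 t ⊆ Icc 0 T := Icc_subset_Icc_right (hsub ⟨ht.1.le, ht.2⟩).1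
  have hst (s) (hs : s ∈ Ico 0 t) : L * C * s ≤ ‖g‖ / 4 ∧ ‖G (s, X κ s) - g‖ < ‖g‖ / 4 :=
    have ⟨_, hLCs, hGs⟩ := hsub ⟨hs.1, hs.2.le.trans ht.2⟩
    ⟨hLCs, hGs κ hκ⟩
  have hsep := le_norm_sub_of_hasDerivAt_add_smul (v := fun t x => F (t, x))
    (w := fun t x => G (t, x)) (x := X κ) (y := Y) ht.1.le hκ.1.le (r₁ := ‖g‖ / 4)
    (fun s hs => hX κ hκ s (hIcc hs)) (fun s hs => hY s (hIcc hs)) (fun s hs => ?_)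
    (fun s hs => (hst s hs).2.le) (by rw [hX0 κ hκ, hY0])
  · linarith
  have hsT := hIcc (Ico_subset_Icc_self hs)
  calc ‖F (s, X κ s) - F (s, Y s)‖ ≤ L * ‖X κ s - Y s‖ :=
        (hL s hsT).norm_sub_le (.inl (hXK κ hκ s hsT)) (.inr ⟨s, hsT, rfl⟩)
    _ ≤ L * (κ * C * s) := by gcongr; exact hXY κ hκ s hsT
    _ ≤ κ * (‖g‖ / 4) := by nlinarith [hκ.1, (hst s hs).1]
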